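/- Let a ∈ ℝ and let ν be a Borel measure on (0,∞) with ∫_{(0,1)} y² ν(dy) < ∞ and ∫_{[1,∞)} y ν(dy) < ∞. Define U(x) := ∫_{(0,x]} y² ν(dy) for x > 0 and J′(z) := −a + ∫_{(0,1)} y (1 − e^{−zy}) ν(dy) − ∫_{[1,∞)} y e^{−zy} ν(dy) for z > 0. Suppose there exist ρ with 0 < ρ < 1 and a function M, positive on some interval (0,δ) and slowly varying at 0, such that U(x) / (x^ρ M(x)) → 1 as x → 0⁺. Then there exist constants a′ > 0 and b′ ∈ ℝ such that J′(z) ≥ a′ (ln z)³ + b′ for all z > 0. -/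

import Mathlib

/-!
Discarding the jumps of size at least `1` costs at most the constant `∫_{[1,∞)} y ν(dy)`,
and on `(0, 1/z]` the integrand `y (1 - e^{-zy})` is at least `z y² / 2`, so
`J′(z) ≥ const + (z/2) U(1/z)`. Regular variation gives `U(t/2) / U(t) → 2^{-ρ}`, hence
`U(t/2) ≥ 2^{-β} U(t)` near `0` for any `β ∈ (ρ, 1)`, and iterating this along dyadic points
gives `U(t) ≥ c t^β`. Thus `J′(z)` grows at least like `z^{1-β}`, which dominates `(log z)³`.
-/

open MeasureTheory Set Filter Topology Real

lemma eventually_pos_of_tendsto_div_nhds_one {α : Type*} {l : Filter α} {f g : α → ℝ}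
    (hf : ∀ᶠ x in l, 0 ≤ f x) (hfg : Tendsto (fun x => f x / g x) l (𝓝 1)) :
    ∀ᶠ x in l, 0 < f x := by
  filter_upwards [hf, hfg.eventually_ne one_ne_zero] with x hx hne
  exact hx.lt_of_ne fun h => hne (by simp [← h])

lemma tendsto_mul_const_nhdsGT_zero {x : ℝ} (hx : 0 < x) :
    Tendsto (fun t => t * x) (𝓝[>] 0) (𝓝[>] 0) :=
  tendsto_nhdsWithin_iff.2
    ⟨((continuous_mul_const x).tendsto' 0 0 (zero_mul x)).mono_left nhdsWithin_le_nhds,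
      eventually_nhdsWithin_of_forall fun t (ht : 0 < t) => mul_pos ht hx⟩

lemma tendsto_div_of_regularVariation {U M : ℝ → ℝ} {ρ x : ℝ} (hx : 0 < x)
    (hM : Tendsto (fun t => M (t * x) / M t) (𝓝[>] 0) (𝓝 1))
    (hU : Tendsto (fun t => U t / (t ^ ρ * M t)) (𝓝[>] 0) (𝓝 1)) :
    Tendsto (fun t => U (t * x) / U t) (𝓝[>] 0) (𝓝 (x ^ ρ)) := by
  have hUx := hU.comp (tendsto_mul_const_nhdsGT_zero hx)
  have hlim := ((hUx.mul_const (x ^ ρ)).mul hM).div hU one_ne_zero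
  rw [one_mul, mul_one, div_one] at hlim
  refine hlim.congr' ?_
  filter_upwards [self_mem_nhdsWithin, hU.eventually_ne one_ne_zero,
    hUx.eventually_ne one_ne_zero] with t (ht : 0 < t) hne hxne
  -- a nonzero quotient has a nonzero denominator, since division by zero gives zero
  have hMt : M t ≠ 0 := fun h => hne (by simp [h])
  have hMtx : M (t * x) ≠ 0 := fun h => hxne (by simp [h])
  simp only [Pi.div_apply, Function.comp_apply, mul_rpow ht.le hx.le]
  field_simp

lemma eventually_half_of_regularVariation {U M : ℝ → ℝ} {ρ β : ℝ} (hρβ : ρ < β)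
    (hM : Tendsto (fun t => M (t * 2⁻¹) / M t) (𝓝[>] 0) (𝓝 1))
    (hU : Tendsto (fun t => U t / (t ^ ρ * M t)) (𝓝[>] 0) (𝓝 1))
    (hpos : ∀ᶠ t in 𝓝[>] 0, 0 < U t) :
    ∀ᶠ t in 𝓝[>] 0, 2⁻¹ ^ β * U t ≤ U (t / 2) := by
  have hlt : (2⁻¹ : ℝ) ^ β < 2⁻¹ ^ ρ :=
    rpow_lt_rpow_of_exponent_gt (by norm_num) (by norm_num) hρβ
  filter_upwards [hpos, (tendsto_div_of_regularVariation (by norm_num) hM hU).eventually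
    (lt_mem_nhds hlt)] with t ht hratio
  rw [← div_eq_mul_inv, lt_div_iff₀ ht] at hratio
  exact hratio.le

section Dyadic

variable {f : ℝ → ℝ} {β t₀ : ℝ}

lemma rpow_inv_two_pow_mul_le_of_half (ht₀ : 0 < t₀)
    (hhalf : ∀ t ∈ Ioc 0 t₀, 2⁻¹ ^ β * f t ≤ f (t / 2)) (n : ℕ) :
    ((2 ^ n)⁻¹ : ℝ) ^ β * f t₀ ≤ f (t₀ / 2 ^ n) := by
  induction n with
  | zero => simp
  | succ n ih =>
    have hmem : t₀ / 2 ^ n ∈ Ioc 0 t₀ :=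
      ⟨by positivity, div_le_self ht₀.le (one_le_pow₀ one_le_two)⟩
    calc ((2 ^ (n + 1))⁻¹ : ℝ) ^ β * f t₀
        = 2⁻¹ ^ β * (((2 ^ n)⁻¹ : ℝ) ^ β * f t₀) := by
          rw [pow_succ, mul_inv, mul_rpow (by positivity) (by positivity)]; ring
      _ ≤ 2⁻¹ ^ β * f (t₀ / 2 ^ n) := by gcongr
      _ ≤ f (t₀ / 2 ^ n / 2) := hhalf _ hmem
      _ = f (t₀ / 2 ^ (n + 1)) := by rw [pow_succ, div_div]

lemma rpow_div_mul_le_of_half (hβ : 0 ≤ β) (ht₀ : 0 < t₀) (hf₀ : 0 ≤ f t₀)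
    (hmono : MonotoneOn f (Ioc 0 t₀))
    (hhalf : ∀ t ∈ Ioc 0 t₀, 2⁻¹ ^ β * f t ≤ f (t / 2))
    {t : ℝ} (ht : t ∈ Ioc 0 t₀) : (t / (2 * t₀)) ^ β * f t₀ ≤ f t := by
  obtain ⟨n, hn, hn'⟩ := exists_nat_pow_near ((one_le_div ht.1).2 ht.2) one_lt_two
  have hlow : t₀ / 2 ^ (n + 1) ≤ t := by
    rw [div_le_iff₀ (by positivity)]; rw [div_lt_iff₀ ht.1] at hn'; linarith
  have hup : t / (2 * t₀) ≤ (2 ^ (n + 1))⁻¹ := by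
    rw [div_le_iff₀ (by positivity), pow_succ]
    rw [le_div_iff₀ ht.1] at hn
    field_simp
    linarith
  calc (t / (2 * t₀)) ^ β * f t₀ ≤ ((2 ^ (n + 1))⁻¹ : ℝ) ^ β * f t₀ := by
        have := ht.1; gcongr
    _ ≤ f (t₀ / 2 ^ (n + 1)) := rpow_inv_two_pow_mul_le_of_half ht₀ hhalf _
    _ ≤ f t := hmono ⟨by positivity, div_le_self ht₀.le (one_le_pow₀ one_le_two)⟩ ht hlow

lemma exists_mul_rpow_le_of_eventually_half {f : ℝ → ℝ} {β : ℝ} (hβ : 0 ≤ β)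
    (hmono : MonotoneOn f (Ioo 0 1)) (hpos : ∀ᶠ t in 𝓝[>] 0, 0 < f t)
    (hhalf : ∀ᶠ t in 𝓝[>] 0, 2⁻¹ ^ β * f t ≤ f (t / 2)) :
    ∃ c > (0 : ℝ), ∃ t₀ > (0 : ℝ), ∀ t ∈ Ioc 0 t₀, c * t ^ β ≤ f t := by
  obtain ⟨t₁, ht₁, hsub⟩ := mem_nhdsGT_iff_exists_Ioc_subset.1 (hpos.and hhalf)
  set t₀ := min t₁ 2⁻¹
  have ht₀ : 0 < t₀ := lt_min ht₁ (by norm_num)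
  have hsub₀ : Ioc 0 t₀ ⊆ Ioc 0 t₁ := Ioc_subset_Ioc_right (min_le_left _ _)
  have hmono₀ : MonotoneOn f (Ioc 0 t₀) := hmono.mono
    (Ioc_subset_Ioo_right ((min_le_right _ _).trans_lt (by norm_num)))
  have hf₀ : 0 < f t₀ := (hsub (hsub₀ ⟨ht₀, le_rfl⟩)).1
  refine ⟨f t₀ / (2 * t₀) ^ β, by positivity, t₀, ht₀, fun t ht => ?_⟩
  calc f t₀ / (2 * t₀) ^ β * t ^ β = (t / (2 * t₀)) ^ β * f t₀ := by
        rw [div_rpow ht.1.le (by positivity)]; ring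
    _ ≤ f t := rpow_div_mul_le_of_half hβ ht₀ hf₀.le hmono₀
        (fun s hs => (hsub (hsub₀ hs)).2) ht

end Dyadic

lemma half_le_one_sub_exp_neg {u : ℝ} (hu₀ : 0 ≤ u) (hu₁ : u ≤ 1) :
    u / 2 ≤ 1 - exp (-u) := by
  have hexp : exp (-u) ≤ (1 + u)⁻¹ := by
    rw [exp_neg]; exact inv_anti₀ (by linarith) (by linarith [add_one_le_exp u])
  have hinv : (1 + u)⁻¹ ≤ 1 - u / 2 := by
    rw [inv_le_iff_one_le_mul₀ (by linarith)]; nlinarith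
  linarith

section LevyMeasure

variable {ν : Measure ℝ} {z : ℝ}

lemma integrableOn_mul_exp_neg_mul (hν : IntegrableOn (fun y => y) (Ici 1) ν) (hz : 0 ≤ z) :
    IntegrableOn (fun y => y * exp (-z * y)) (Ici 1) ν := by
  refine Integrable.mono hν (by fun_prop)
    (ae_restrict_of_forall_mem measurableSet_Ici fun y (hy : 1 ≤ y) => ?_)
  have : exp (-z * y) ≤ 1 := exp_le_one_iff.2 (by nlinarith)
  rw [norm_mul, norm_of_nonneg (exp_pos _).le]
  exact mul_le_of_le_one_right (norm_nonneg _) this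

lemma setIntegral_mul_exp_neg_mul_le (hν : IntegrableOn (fun y => y) (Ici 1) ν) (hz : 0 ≤ z) :
    ∫ y in Ici 1, y * exp (-z * y) ∂ν ≤ ∫ y in Ici 1, y ∂ν := by
  refine setIntegral_mono_on (integrableOn_mul_exp_neg_mul hν hz) hν measurableSet_Ici
    fun y (hy : 1 ≤ y) => mul_le_of_le_one_right (by linarith) (exp_le_one_iff.2 (by nlinarith))

lemma mul_one_sub_exp_neg_mul_nonneg {y : ℝ} (hz : 0 ≤ z) (hy : 0 ≤ y) :
    0 ≤ y * (1 - exp (-z * y)) :=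
  mul_nonneg hy (sub_nonneg.2 (exp_le_one_iff.2 (by nlinarith)))

lemma integrableOn_mul_one_sub_exp_neg_mul (hν : IntegrableOn (fun y => y ^ 2) (Ioo 0 1) ν)
    (hz : 0 ≤ z) : IntegrableOn (fun y => y * (1 - exp (-z * y))) (Ioo 0 1) ν := by
  refine Integrable.mono (hν.const_mul z) (by fun_prop)
    (ae_restrict_of_forall_mem measurableSet_Ioo fun y hy => ?_)
  have hle : 1 - exp (-z * y) ≤ z * y := by rw [neg_mul]; linarith [one_sub_le_exp_neg (z * y)]
  rw [norm_of_nonneg (mul_one_sub_exp_neg_mul_nonneg hz hy.1.le),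
    norm_of_nonneg (by have := hy.1; positivity)]
  nlinarith [hy.1]

lemma setIntegral_mul_one_sub_exp_neg_mul_nonneg (hz : 0 ≤ z) :
    0 ≤ ∫ y in Ioo 0 1, y * (1 - exp (-z * y)) ∂ν :=
  setIntegral_nonneg measurableSet_Ioo fun _ hy => mul_one_sub_exp_neg_mul_nonneg hz hy.1.le

lemma half_mul_setIntegral_sq_le (hν : IntegrableOn (fun y => y ^ 2) (Ioo 0 1) ν)
    (hz : 1 < z) :
    z / 2 * ∫ y in Ioc 0 z⁻¹, y ^ 2 ∂ν ≤
      ∫ y in Ioo 0 1, y * (1 - exp (-z * y)) ∂ν := by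
  have hz₀ : 0 < z := by linarith
  have hsub : Ioc 0 z⁻¹ ⊆ Ioo 0 1 := Ioc_subset_Ioo_right (inv_lt_one_of_one_lt₀ hz)
  have hint := integrableOn_mul_one_sub_exp_neg_mul hν hz₀.le
  rw [← integral_const_mul]
  calc ∫ y in Ioc 0 z⁻¹, z / 2 * y ^ 2 ∂ν
      ≤ ∫ y in Ioc 0 z⁻¹, y * (1 - exp (-z * y)) ∂ν := by
        refine setIntegral_mono_on ((hν.mono_set hsub).const_mul _) (hint.mono_set hsub)
          measurableSet_Ioc fun y hy => ?_
        have hzy : z * y ≤ 1 := by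
          simpa [hz₀.ne'] using mul_le_mul_of_nonneg_left hy.2 hz₀.le
        have := half_le_one_sub_exp_neg (by have := hy.1; positivity) hzy
        rw [neg_mul]
        nlinarith [hy.1]
    _ ≤ ∫ y in Ioo 0 1, y * (1 - exp (-z * y)) ∂ν :=
        setIntegral_mono_set hint
          (ae_restrict_of_forall_mem measurableSet_Ioo fun _ hy =>
            mul_one_sub_exp_neg_mul_nonneg hz₀.le hy.1.le)
          hsub.eventuallyLE

lemma monotoneOn_setIntegral_Ioc_sq (hν : IntegrableOn (fun y => y ^ 2) (Ioo 0 1) ν) :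
    MonotoneOn (fun x => ∫ y in Ioc 0 x, y ^ 2 ∂ν) (Ioo 0 1) := fun _ _ _ ht hst =>
  setIntegral_mono_set (hν.mono_set (Ioc_subset_Ioo_right ht.2))
    (Eventually.of_forall fun y => sq_nonneg y) (Ioc_subset_Ioc_right hst).eventuallyLE

end LevyMeasure

lemma exists_log_pow_three_le {f : ℝ → ℝ} {B c γ : ℝ} (hc : 0 < c) (hγ : 0 < γ)
    (hB : ∀ z > 0, B ≤ f z) (hgrowth : ∀ᶠ z in atTop, B + c * z ^ γ ≤ f z) :
    ∃ a' > (0 : ℝ), ∃ b' : ℝ, ∀ z > (0 : ℝ), a' * log z ^ 3 + b' ≤ f z := by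
  have hlog : ∀ᶠ z in atTop, log z ^ 3 ≤ c * z ^ γ := by
    filter_upwards [(isLittleO_log_rpow_rpow_atTop 3 hγ).def hc, eventually_ge_atTop 1]
      with z hz hz₁
    have : 0 ≤ log z := log_nonneg hz₁
    rw [norm_of_nonneg (by positivity), norm_of_nonneg (by positivity)] at hz
    exact_mod_cast hz
  obtain ⟨Z, hZ⟩ := eventually_atTop.1 (hlog.and (hgrowth.and (eventually_ge_atTop 1)))
  have hZ₁ : 1 ≤ Z := (hZ Z le_rfl).2.2
  have hlogZ : 0 ≤ log Z ^ 3 := pow_nonneg (log_nonneg hZ₁) 3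
  refine ⟨1, one_pos, B - log Z ^ 3, fun z hz => ?_⟩
  rcases le_total z Z with hzZ | hZz
  · have : log z ^ 3 ≤ log Z ^ 3 := (Odd.pow_le_pow (by decide)).2 (log_le_log hz hzZ)
    linarith [hB z hz]
  · obtain ⟨h₁, h₂, -⟩ := hZ z hZz
    linarith

theorem Jprime_cubic_log_growth_of_tauberian_rho_lt_one_general
    (a : ℝ) (ν : MeasureTheory.Measure ℝ)
    (hint1 : MeasureTheory.IntegrableOn (fun y => y ^ 2) (Set.Ioo 0 1) ν)
    (hint2 : MeasureTheory.IntegrableOn (fun y => y) (Set.Ici 1) ν)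
    (U : ℝ → ℝ) (hU : ∀ x > (0:ℝ), U x = ∫ y in Set.Ioc 0 x, y ^ 2 ∂ν)
    (J' : ℝ → ℝ)
    (hJ : ∀ z > (0:ℝ), J' z = -a
      + (∫ y in Set.Ioo 0 1, y * (1 - Real.exp (-z * y)) ∂ν)
      - ∫ y in Set.Ici 1, y * Real.exp (-z * y) ∂ν)
    (ρ : ℝ) (hρ0 : 0 < ρ) (hρ1 : ρ < 1)
    (M : ℝ → ℝ)
    (hslow : ∀ x > (0:ℝ), Filter.Tendsto (fun t => M (t * x) / M t)
      (nhdsWithin 0 (Set.Ioi 0)) (nhds 1))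
    (hUasymp : Filter.Tendsto (fun x => U x / (x ^ ρ * M x))
      (nhdsWithin 0 (Set.Ioi 0)) (nhds 1)) :
    ∃ a' > (0:ℝ), ∃ b' : ℝ, ∀ z > (0:ℝ),
      a' * (Real.log z) ^ 3 + b' ≤ J' z := by
  obtain ⟨β, hρβ, hβ1⟩ := exists_between hρ1
  set I := ∫ y in Ici 1, y ∂ν
  have hUpos : ∀ᶠ t in 𝓝[>] 0, 0 < U t := eventually_pos_of_tendsto_div_nhds_one
    (eventually_nhdsWithin_of_forall fun t ht => (hU t ht).symm ▸ integral_nonneg sq_nonneg)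
    hUasymp
  have hUmono : MonotoneOn U (Ioo 0 1) := fun s hs t ht hst => by
    rw [hU s hs.1, hU t ht.1]; exact monotoneOn_setIntegral_Ioc_sq hint1 hs ht hst
  have hUhalf : ∀ᶠ t in 𝓝[>] 0, 2⁻¹ ^ β * U t ≤ U (t / 2) :=
    eventually_half_of_regularVariation hρβ (hslow 2⁻¹ (by norm_num)) hUasymp hUpos
  obtain ⟨c, hc, t₀, ht₀, hUlow⟩ :=
    exists_mul_rpow_le_of_eventually_half (by linarith) hUmono hUpos hUhalf
  have hJlow : ∀ z > 0, -a - I + ∫ y in Ioo 0 1, y * (1 - exp (-z * y)) ∂ν ≤ J' z :=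
    fun z hz => by rw [hJ z hz]; linarith [setIntegral_mul_exp_neg_mul_le hint2 hz.le]
  refine exists_log_pow_three_le (B := -a - I) (c := c / 2) (γ := 1 - β) (by positivity)
    (sub_pos.2 hβ1) (fun z hz => ?_) ?_
  · linarith [hJlow z hz, setIntegral_mul_one_sub_exp_neg_mul_nonneg (ν := ν) hz.le]
  filter_upwards [eventually_gt_atTop 1, eventually_ge_atTop t₀⁻¹] with z hz₁ hzt₀
  have hz : 0 < z := by linarith
  have hmem : z⁻¹ ∈ Ioc 0 t₀ := ⟨inv_pos.2 hz, inv_le_of_inv_le₀ ht₀ hzt₀⟩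
  calc -a - I + c / 2 * z ^ (1 - β) = -a - I + z / 2 * (c * z⁻¹ ^ β) := by
        rw [inv_rpow hz.le, rpow_sub hz, rpow_one]; field_simp
    _ ≤ -a - I + z / 2 * U z⁻¹ := by gcongr; exact hUlow _ hmem
    _ ≤ J' z := by
        rw [hU _ (inv_pos.2 hz)]; linarith [half_mul_setIntegral_sq_le hint1 hz₁, hJlow z hz]

/-- (Tauberian explosion criterion, case `ρ < 1`.) If
`U(x) = ∫_{(0,x]} y² ν(dy)` behaves like `x^ρ M(x)` as `x → 0⁺` with `0 < ρ < 1` and `M`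
slowly varying at `0`, then `J′(z) ≥ a′ (ln z)³ + b′` for all `z > 0`, for some
`a′ > 0` and `b′ ∈ ℝ`. -/
theorem Jprime_cubic_log_growth_of_tauberian_rho_lt_one
    (a : ℝ) (ν : MeasureTheory.Measure ℝ) (hν : ν (Set.Iic 0) = 0)
    (hint1 : MeasureTheory.IntegrableOn (fun y => y ^ 2) (Set.Ioo 0 1) ν)
    (hint2 : MeasureTheory.IntegrableOn (fun y => y) (Set.Ici 1) ν)
    (U : ℝ → ℝ) (hU : ∀ x > (0:ℝ), U x = ∫ y in Set.Ioc 0 x, y ^ 2 ∂ν)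
    (J' : ℝ → ℝ)
    (hJ : ∀ z > (0:ℝ), J' z = -a
      + (∫ y in Set.Ioo 0 1, y * (1 - Real.exp (-z * y)) ∂ν)
      - ∫ y in Set.Ici 1, y * Real.exp (-z * y) ∂ν)
    (ρ : ℝ) (hρ0 : 0 < ρ) (hρ1 : ρ < 1)
    (M : ℝ → ℝ) (δ : ℝ) (hδ : 0 < δ)
    (hMpos : ∀ x ∈ Set.Ioo (0:ℝ) δ, 0 < M x)
    (hslow : ∀ x > (0:ℝ), Filter.Tendsto (fun t => M (t * x) / M t)
      (nhdsWithin 0 (Set.Ioi 0)) (nhds 1))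
    (hUasymp : Filter.Tendsto (fun x => U x / (x ^ ρ * M x))
      (nhdsWithin 0 (Set.Ioi 0)) (nhds 1)) :
    ∃ a' > (0:ℝ), ∃ b' : ℝ, ∀ z > (0:ℝ),
      a' * (Real.log z) ^ 3 + b' ≤ J' z :=
  Jprime_cubic_log_growth_of_tauberian_rho_lt_one_general a ν hint1 hint2 U hU J' hJ ρ hρ0 hρ1 M
    hslow hUasymp
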